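/- arXiv:0808.0684 — 2 statements merged into one kernel-verified Lean document; each statement's English description precedes it below -/
import Mathlib

section
/- Let n and k be positive integers with k | n. The number of orbits d_{n,k} of the group D^k_n = {ρ^i_n, τ_n∘ρ^i_n : i = k, 2k, …, n} acting on {0,1}^n equals g_{n,k}/2 + l, where g_{n,k} = (k/n) · Σ_{t | (n/k)} φ(t) · 2^{n/t}, and l = 2^{(n/2)−1} if n is even and k is even; l = (3/4)·2^{n/2} if n is even and k is odd; and l = 2^{(n−1)/2} if n is odd. -/
/-- Left `i`-cyclic shift: `(bvRot n i x) j = x ((j + i) mod n)`. -/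
def bvRot (n i : ℕ) (x : Fin n → Bool) : Fin n → Bool :=
  fun j => x ⟨(j.val + i) % n, Nat.mod_lt _ (Nat.zero_lt_of_lt j.isLt)⟩

/-- Reflection operator: `(bvRefl n x) j = x (n - 1 - j)`. -/
def bvRefl (n : ℕ) (x : Fin n → Bool) : Fin n → Bool :=
  fun j => x ⟨n - 1 - j.val, by have := j.isLt; omega⟩

/-- Coordinatewise XOR of binary vectors. -/
def bvXor {n : ℕ} (x y : Fin n → Bool) : Fin n → Bool := fun i => xor (x i) (y i)

/-- Inner product over GF(2). -/
def bIP {n : ℕ} (x w : Fin n → Bool) : Bool :=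
  (Finset.univ.filter (fun i => x i && w i)).card % 2 == 1

/-- Hamming distance between Boolean functions. -/
def hDist {n : ℕ} (f g : (Fin n → Bool) → Bool) : ℕ :=
  (Finset.univ.filter fun x => f x ≠ g x).card

/-- The affine Boolean function `x ↦ c ⊕ ⟨x, w⟩`. -/
def bAffine {n : ℕ} (c : Bool) (w : Fin n → Bool) : (Fin n → Bool) → Bool :=
  fun x => xor c (bIP x w)

/-- Nonlinearity: minimum Hamming distance to an affine function. -/
def nl {n : ℕ} (f : (Fin n → Bool) → Bool) : ℕ :=
  Finset.univ.inf' Finset.univ_nonempty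
    (fun p : Bool × (Fin n → Bool) => hDist f (bAffine p.1 p.2))

def sgn (b : Bool) : ℤ := if b then -1 else 1

/-- Walsh transform. -/
def walsh {n : ℕ} (f : (Fin n → Bool) → Bool) (w : Fin n → Bool) : ℤ :=
  ∑ x : Fin n → Bool, sgn (f x) * sgn (bIP x w)

/-- Autocorrelation function. -/
def autocorr {n : ℕ} (f : (Fin n → Bool) → Bool) (d : Fin n → Bool) : ℤ :=
  ∑ x : Fin n → Bool, sgn (f x) * sgn (f (bvXor x d))

/-- Absolute indicator: maximum of `|autocorr f d|` over `d ≠ 0`. -/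
def absInd {n : ℕ} (f : (Fin n → Bool) → Bool) : ℕ :=
  (Finset.univ.filter (fun d : Fin n → Bool => d ≠ fun _ => false)).sup
    (fun d => (autocorr f d).natAbs)

/-- ANF coefficient of the monomial `∏_{i ∈ S} x_i`. -/
def anfCoeff {n : ℕ} (f : (Fin n → Bool) → Bool) (S : Finset (Fin n)) : Bool :=
  (Finset.univ.filter
    (fun x : Fin n → Bool => (∀ i, x i = true → i ∈ S) ∧ f x = true)).card % 2 == 1

/-- Algebraic degree of a Boolean function. -/
def algDeg {n : ℕ} (f : (Fin n → Bool) → Bool) : ℕ :=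
  (Finset.univ.filter (fun S : Finset (Fin n) => anfCoeff f S = true)).sup Finset.card

/-- Orbit of `x` under the cyclic shift group. -/
def cycOrbit (n : ℕ) (x : Fin n → Bool) : Finset (Fin n → Bool) :=
  Finset.univ.image fun i : Fin n => bvRot n i x

/-- Orbit of `x` under the group generated by the `k`-cyclic shift. -/
def kCycOrbit (n k : ℕ) (x : Fin n → Bool) : Finset (Fin n → Bool) :=
  Finset.univ.image fun i : Fin (n / k) => bvRot n (k * i) x

/-- Orbit of `x` under the dihedral group. -/
def dihOrbit (n : ℕ) (x : Fin n → Bool) : Finset (Fin n → Bool) :=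
  (Finset.univ.image fun i : Fin n => bvRot n i x) ∪
  (Finset.univ.image fun i : Fin n => bvRefl n (bvRot n i x))

/-- Orbit of `x` under the group `D^k_n = {ρ^{ik}, τ ∘ ρ^{ik}}`. -/
def kDihOrbit (n k : ℕ) (x : Fin n → Bool) : Finset (Fin n → Bool) :=
  (Finset.univ.image fun i : Fin (n / k) => bvRot n (k * i) x) ∪
  (Finset.univ.image fun i : Fin (n / k) => bvRefl n (bvRot n (k * i) x))


/-!
Burnside's lemma for `DihedralGroup (n / k)`, acting on words by `r i ↦ ρ^{ki}` and
`sr i ↦ τ ∘ ρ^{ki}`. A word fixed by a permutation of positions is a function on its cycles.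
The rotation `ρ^j` has `gcd n j` cycles (residues modulo `gcd n j`, by Bézout), and grouping
`i < n / k` by `gcd (n / k) i` turns the rotation terms into the totient sum `g_{n,k}`.
Conjugating by rotations shows that `τ ∘ ρ^{j + 2t}` has as many cycles as `τ ∘ ρ^j`, namely
`⌈n / 2⌉` for even `j` and `⌊n / 2⌋ + 1` for odd `j`; averaging these gives `l`.
-/

open Finset Function

section InvariantFunctions

variable {α β γ : Type*}

/-- The hypotheses say that the fibres of `f` are exactly the `σ`-orbits. -/
theorem card_comp_invariant_eq_pow [Finite γ] (σ : α → α) (f : α → γ) (hf : Surjective f)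
    (hfσ : ∀ a, f (σ a) = f a) (horbit : ∀ a b, f a = f b → ∃ t, σ^[t] a = b) :
    Nat.card {x : α → β // x ∘ σ = x} = Nat.card β ^ Nat.card γ := by
  let e : {x : α → β // x ∘ σ = x} ≃ (γ → β) :=
    { toFun := fun x c => x.1 (surjInv hf c)
      invFun := fun y => ⟨y ∘ f, funext fun a => congrArg y (hfσ a)⟩
      left_inv := fun x => Subtype.ext <| funext fun a => by
        obtain ⟨t, ht⟩ := horbit _ a (surjInv_eq hf (f a))
        have := congrFun (iterate_invariant x.2 t) (surjInv hf (f a))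
        rw [comp_apply, ht] at this
        exact this.symm
      right_inv := fun y => funext fun c => congrArg y (surjInv_eq hf c) }
  rw [Nat.card_congr e, Nat.card_fun]

theorem card_comp_invariant_congr (ρ : α ≃ α) {σ σ' : α → α}
    (h : ∀ a, σ (ρ a) = ρ (σ' a)) :
    Nat.card {x : α → β // x ∘ σ = x} = Nat.card {x : α → β // x ∘ σ' = x} := by
  refine Nat.card_congr ((ρ.symm.arrowCongr (Equiv.refl β)).subtypeEquiv fun x => ?_)
  simp only [Equiv.arrowCongr_apply, Equiv.symm_symm, Equiv.coe_refl, funext_iff,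
    comp_apply, id_eq]
  refine ⟨fun hx a => by rw [← h, hx], fun hx a => ?_⟩
  rw [← ρ.apply_symm_apply a, h, hx]

/-- The least elements of the orbits `{a, σ a}` are exactly the `b < K`. -/
theorem card_comp_involutive_eq_pow {N K : ℕ} {σ : Fin N → Fin N} (hσ : Involutive σ)
    (hKN : K ≤ N) (hlt : ∀ a, min a.val (σ a).val < K)
    (hle : ∀ b : Fin N, b.val < K → b.val ≤ (σ b).val) :
    Nat.card {x : Fin N → β // x ∘ σ = x} = Nat.card β ^ K := by
  rw [card_comp_invariant_eq_pow σ (fun a => (⟨min a.val (σ a).val, hlt a⟩ : Fin K)),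
    Nat.card_fin]
  · intro c
    exact ⟨⟨c, c.2.trans_le hKN⟩, Fin.ext (min_eq_left (hle _ c.2))⟩
  · intro a
    simp only [hσ a, min_comm]
  · intro a b hab
    have hab' : min a.val (σ a).val = min b.val (σ b).val := congrArg Fin.val hab
    suffices b = a ∨ b = σ a by
      rcases this with rfl | rfl
      exacts [⟨0, rfl⟩, ⟨1, rfl⟩]
    rcases min_choice a.val (σ a).val with ha | ha <;>
      rcases min_choice b.val (σ b).val with hb | hb <;> rw [ha, hb] at hab'
    · exact Or.inl (Fin.ext hab'.symm)
    · rw [Fin.ext hab', hσ b]; exact Or.inr rfl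
    · exact Or.inr (Fin.ext hab'.symm)
    · exact Or.inl (hσ.injective (Fin.ext hab'.symm))

end InvariantFunctions

section Indices

def rotIndex (N j : ℕ) (a : Fin N) : Fin N :=
  ⟨(a.val + j) % N, Nat.mod_lt _ (Nat.zero_lt_of_lt a.isLt)⟩

def reflIndex (N : ℕ) (a : Fin N) : Fin N :=
  ⟨N - 1 - a.val, by have := a.isLt; omega⟩

variable {N : ℕ}

/-- Identities between index maps are checked in `ZMod N`, where `rotIndex N j` and
`reflIndex N` become `a ↦ a + j` and `a ↦ -1 - a`. -/
theorem Fin.eq_of_natCast_zmod_eq {a b : Fin N} (h : (a.val : ZMod N) = b.val) : a = b :=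
  Fin.ext <| by
    rwa [ZMod.natCast_eq_natCast_iff', Nat.mod_eq_of_lt a.isLt, Nat.mod_eq_of_lt b.isLt] at h

@[simp]
theorem natCast_rotIndex (j : ℕ) (a : Fin N) :
    ((rotIndex N j a).val : ZMod N) = a.val + j := by
  simp [rotIndex, ZMod.natCast_mod]

@[simp]
theorem natCast_reflIndex (a : Fin N) : ((reflIndex N a).val : ZMod N) = -1 - a.val := by
  have := a.isLt
  simp only [reflIndex, Nat.cast_sub (by omega : a.val ≤ N - 1),
    Nat.cast_sub (by omega : 1 ≤ N), ZMod.natCast_self, Nat.cast_one]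
  ring

theorem natCast_iterate_rotIndex (j t : ℕ) (a : Fin N) :
    (((rotIndex N j)^[t] a).val : ZMod N) = a.val + t * j := by
  induction t with
  | zero => simp
  | succ t ih => rw [iterate_succ_apply', natCast_rotIndex, ih]; push_cast; ring

theorem rotIndex_bijective (j : ℕ) : Bijective (rotIndex N j) :=
  Finite.injective_iff_bijective.mp fun a b h => Fin.eq_of_natCast_zmod_eq <| by
    simpa using congrArg (fun c : Fin N => (c.val : ZMod N)) h

theorem involutive_rotIndex_comp_reflIndex (j : ℕ) : Involutive (rotIndex N j ∘ reflIndex N) :=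
  fun a => Fin.eq_of_natCast_zmod_eq <| by
    simp only [comp_apply, natCast_rotIndex, natCast_reflIndex]
    ring

end Indices

section Rotations

variable {N : ℕ} [NeZero N] {β : Type*}

/-- Bézout: `j` generates the subgroup `gcd N j • ZMod N`, so the orbit of `a` under `+ j`
is its residue class modulo `gcd N j`. -/
theorem exists_iterate_rotIndex_eq {j : ℕ} {a b : Fin N}
    (h : a.val % N.gcd j = b.val % N.gcd j) : ∃ t, (rotIndex N j)^[t] a = b := by
  obtain ⟨q, hq⟩ := Nat.modEq_iff_dvd.mp h
  refine ⟨((Nat.gcdB N j * q : ℤ) : ZMod N).val, Fin.eq_of_natCast_zmod_eq ?_⟩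
  have hbez := congrArg (Int.cast : ℤ → ZMod N) (Nat.gcd_eq_gcd_ab N j)
  have hdiff := congrArg (Int.cast : ℤ → ZMod N) hq
  push_cast [ZMod.natCast_self] at hbez hdiff
  rw [natCast_iterate_rotIndex, ZMod.natCast_zmod_val]
  push_cast
  linear_combination -hdiff - q * hbez

theorem card_rotIndex_invariant (j : ℕ) :
    Nat.card {x : Fin N → β // x ∘ rotIndex N j = x} = Nat.card β ^ N.gcd j := by
  have hg : 0 < N.gcd j := Nat.gcd_pos_of_pos_left _ (NeZero.pos N)
  rw [card_comp_invariant_eq_pow (rotIndex N j)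
    (fun a => (⟨a.val % N.gcd j, Nat.mod_lt _ hg⟩ : Fin (N.gcd j))), Nat.card_fin]
  · intro c
    exact ⟨⟨c, c.2.trans_le (Nat.gcd_le_left _ (NeZero.pos N))⟩,
      Fin.ext (Nat.mod_eq_of_lt c.2)⟩
  · intro a
    refine Fin.ext ((Nat.mod_mod_of_dvd _ (Nat.gcd_dvd_left N j)).trans ?_)
    exact (Nat.modEq_zero_iff_dvd.mpr (Nat.gcd_dvd_right N j)).add_left a.val
  · exact fun a b h => exists_iterate_rotIndex_eq (Fin.mk.inj h)

end Rotations

section Reflections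

variable {N : ℕ} {β : Type*}

theorem card_reflection_invariant_add_two_mul (j t : ℕ) :
    Nat.card {x : Fin N → β // x ∘ (rotIndex N (j + 2 * t) ∘ reflIndex N) = x} =
      Nat.card {x : Fin N → β // x ∘ (rotIndex N j ∘ reflIndex N) = x} :=
  card_comp_invariant_congr (Equiv.ofBijective _ (rotIndex_bijective t)) fun a =>
    Fin.eq_of_natCast_zmod_eq <| by
      simp only [Equiv.ofBijective_apply, comp_apply, natCast_rotIndex, natCast_reflIndex]
      push_cast
      ring

theorem card_reflection_invariant_zero :
    Nat.card {x : Fin N → β // x ∘ (rotIndex N 0 ∘ reflIndex N) = x} =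
      Nat.card β ^ ((N + 1) / 2) := by
  have hval (a : Fin N) : ((rotIndex N 0 ∘ reflIndex N) a).val = N - 1 - a.val :=
    Nat.mod_eq_of_lt (by simp only [reflIndex]; omega)
  refine card_comp_involutive_eq_pow (involutive_rotIndex_comp_reflIndex 0)
    (by omega) (fun a => ?_) (fun b hb => ?_)
  · rw [hval]; omega
  · rw [hval]; omega

theorem card_reflection_invariant_one [NeZero N] :
    Nat.card {x : Fin N → β // x ∘ (rotIndex N 1 ∘ reflIndex N) = x} =
      Nat.card β ^ (N / 2 + 1) := by
  have hN := NeZero.pos N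
  have hval (a : Fin N) :
      ((rotIndex N 1 ∘ reflIndex N) a).val = if a.val = 0 then 0 else N - a.val := by
    show (N - 1 - a.val + 1) % N = _
    split_ifs with ha
    · rw [ha, Nat.sub_zero, Nat.sub_add_cancel hN, Nat.mod_self]
    · rw [Nat.mod_eq_of_lt (by omega)]; omega
  refine card_comp_involutive_eq_pow (involutive_rotIndex_comp_reflIndex 1)
    (by omega) (fun a => ?_) (fun b hb => ?_)
  · rw [hval]; split_ifs <;> omega
  · rw [hval]; split_ifs <;> omega

theorem card_reflection_invariant [NeZero N] (j : ℕ) :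
    Nat.card {x : Fin N → β // x ∘ (rotIndex N j ∘ reflIndex N) = x} =
      Nat.card β ^ (if Even j then (N + 1) / 2 else N / 2 + 1) := by
  obtain ⟨t, rfl | rfl⟩ := Nat.even_or_odd' j
  · rw [if_pos (even_two_mul t), ← zero_add (2 * t), card_reflection_invariant_add_two_mul,
      card_reflection_invariant_zero]
  · rw [if_neg (Nat.not_even_two_mul_add_one t), add_comm, card_reflection_invariant_add_two_mul,
      card_reflection_invariant_one]

end Reflections

section DihedralAction

variable {k m : ℕ}

abbrev BlockWord (k m : ℕ) := Fin (k * m) → Bool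

def dihIndex (k m : ℕ) : DihedralGroup m → Fin (k * m) → Fin (k * m)
  | .r i => rotIndex (k * m) (k * i.val)
  | .sr i => rotIndex (k * m) (k * i.val) ∘ reflIndex (k * m)

theorem natCast_mul_val_add [NeZero m] (i j : ZMod m) :
    ((k * (i + j).val : ℕ) : ZMod (k * m)) = (k * i.val : ℕ) + (k * j.val : ℕ) := by
  rw [← Nat.cast_add, ZMod.natCast_eq_natCast_iff, ZMod.val_add, ← mul_add]
  exact (Nat.mod_modEq _ m).mul_left' k

theorem natCast_mul_val_sub [NeZero m] (i j : ZMod m) :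
    ((k * (j - i).val : ℕ) : ZMod (k * m)) = (k * j.val : ℕ) - (k * i.val : ℕ) := by
  rw [eq_sub_iff_add_eq, ← natCast_mul_val_add, sub_add_cancel]

theorem dihIndex_one : dihIndex k m 1 = id := by
  rw [DihedralGroup.one_def]
  exact funext fun a => Fin.ext <| by simp [dihIndex, rotIndex, Nat.mod_eq_of_lt a.isLt]

theorem dihIndex_mul [NeZero m] (g h : DihedralGroup m) :
    dihIndex k m (g * h) = dihIndex k m h ∘ dihIndex k m g := by
  funext a
  apply Fin.eq_of_natCast_zmod_eq
  rcases g with i | i <;> rcases h with j | j <;>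
    simp only [DihedralGroup.r_mul_r, DihedralGroup.r_mul_sr, DihedralGroup.sr_mul_r,
      DihedralGroup.sr_mul_sr, dihIndex, comp_apply, natCast_rotIndex, natCast_reflIndex,
      natCast_mul_val_add, natCast_mul_val_sub] <;> ring

instance [NeZero m] : MulAction (DihedralGroup m) (BlockWord k m) where
  smul g x := x ∘ dihIndex k m g
  one_smul x := by
    show x ∘ dihIndex k m 1 = x
    rw [dihIndex_one, comp_id]
  mul_smul g h x := by
    show x ∘ dihIndex k m (g * h) = (x ∘ dihIndex k m h) ∘ dihIndex k m g
    rw [dihIndex_mul, comp_assoc]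

theorem mem_kDihOrbit_iff [NeZero k] [NeZero m] {x y : BlockWord k m} :
    y ∈ kDihOrbit (k * m) k x ↔ y ∈ MulAction.orbit (DihedralGroup m) x := by
  have hm : k * m / k = m := Nat.mul_div_cancel_left m (NeZero.pos k)
  simp only [kDihOrbit, mem_union, mem_image, mem_univ, true_and, MulAction.mem_orbit_iff]
  constructor
  · rintro (⟨i, rfl⟩ | ⟨i, rfl⟩)
    · refine ⟨.r i.val, ?_⟩
      show bvRot _ (k * ZMod.val (i.val : ZMod m)) x = _
      rw [ZMod.val_cast_of_lt (i.isLt.trans_eq hm)]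
    · refine ⟨.sr i.val, ?_⟩
      show bvRefl _ (bvRot _ (k * ZMod.val (i.val : ZMod m)) x) = _
      rw [ZMod.val_cast_of_lt (i.isLt.trans_eq hm)]
  · rintro ⟨i | i, rfl⟩
    · exact Or.inl ⟨⟨i.val, i.val_lt.trans_eq hm.symm⟩, rfl⟩
    · exact Or.inr ⟨⟨i.val, i.val_lt.trans_eq hm.symm⟩, rfl⟩

theorem card_image_kDihOrbit [NeZero k] [NeZero m] :
    #(univ.image (kDihOrbit (k * m) k)) =
      Nat.card (MulAction.orbitRel.Quotient (DihedralGroup m) (BlockWord k m)) := by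
  have hker : Setoid.ker (kDihOrbit (k * m) k) = MulAction.orbitRel (DihedralGroup m) _ := by
    ext x y
    rw [Setoid.ker_def, MulAction.orbitRel_apply, ← MulAction.orbit_eq_iff, Finset.ext_iff,
      Set.ext_iff]
    simp only [mem_kDihOrbit_iff]
  rw [← Set.toFinset_range, ← Nat.card_eq_card_toFinset,
    ← Nat.card_congr (Setoid.quotientKerEquivRange _), hker]

end DihedralAction

section Sums

theorem sum_zmod_val_eq_sum_range {M : Type*} [AddCommMonoid M] (m : ℕ) [NeZero m]
    (f : ℕ → M) : ∑ i : ZMod m, f i.val = ∑ i ∈ range m, f i := by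
  obtain ⟨m, rfl⟩ := Nat.exists_eq_succ_of_ne_zero (NeZero.ne m)
  exact Fin.sum_univ_eq_sum_range f _

theorem sum_range_gcd_eq_sum_divisors {M : Type*} [AddCommMonoid M] (m : ℕ) (F : ℕ → M) :
    ∑ i ∈ range m, F (m.gcd i) = ∑ t ∈ m.divisors, t.totient • F (m / t) := by
  rw [← Nat.sum_div_divisors, ← sum_fiberwise_of_maps_to (g := m.gcd) (t := m.divisors)
    fun i hi => Nat.mem_divisors.mpr ⟨Nat.gcd_dvd_left m i, by have := mem_range.mp hi; omega⟩]
  refine sum_congr rfl fun d hd => ?_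
  have hdm := Nat.dvd_of_mem_divisors hd
  rw [Nat.div_div_self hdm (Nat.ne_zero_of_mem_divisors hd), Nat.totient_div_of_dvd hdm,
    ← sum_const]
  exact sum_congr rfl fun i hi => by rw [(mem_filter.mp hi).2]

theorem sum_range_two_pow_mul_gcd (k m : ℕ) :
    ∑ i ∈ range m, 2 ^ (k * m.gcd i) = ∑ t ∈ m.divisors, t.totient * 2 ^ (k * m / t) :=
  (sum_range_gcd_eq_sum_divisors m fun d => 2 ^ (k * d)).trans <| sum_congr rfl fun t ht => by
    rw [smul_eq_mul, Nat.mul_div_assoc k (Nat.dvd_of_mem_divisors ht)]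

theorem sum_range_two_mul_ite_even {M : Type*} [AddCommMonoid M] (c : ℕ) (A B : M) :
    ∑ i ∈ range (2 * c), (if Even i then A else B) = c • (A + B) := by
  induction c with
  | zero => simp
  | succ c ih =>
    rw [mul_add_one, sum_range_succ, sum_range_succ, ih, if_pos (even_two_mul c),
      if_neg (Nat.not_even_two_mul_add_one c), succ_nsmul, add_assoc]

theorem sum_reflection_exponent_div (k m : ℕ) [NeZero k] [NeZero m] :
    (∑ i ∈ range m, (2 : ℚ) ^ (if Even (k * i) then (k * m + 1) / 2 else k * m / 2 + 1)) /
        (2 * m) =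
      if Even (k * m) then (if Even k then 2 ^ (k * m / 2 - 1) else 3 / 4 * 2 ^ (k * m / 2))
      else 2 ^ ((k * m - 1) / 2) := by
  have hN : 0 < k * m := Nat.mul_pos (NeZero.pos k) (NeZero.pos m)
  have hm : (m : ℚ) ≠ 0 := Nat.cast_ne_zero.mpr (NeZero.ne m)
  rw [div_eq_iff (by positivity)]
  split_ifs with hN2 hk2
  · rw [sum_congr rfl fun i _ => by rw [if_pos (hk2.mul_right i)], sum_const, card_range,
      nsmul_eq_mul, show (k * m + 1) / 2 = k * m / 2 - 1 + 1 by grind, pow_succ]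
    ring
  · obtain ⟨c, rfl⟩ := (Nat.even_mul.mp hN2).resolve_left hk2
    have hexp : (k * (c + c) + 1) / 2 = k * (c + c) / 2 := by grind
    have hterm (i : ℕ) :
        (2 : ℚ) ^ (if Even (k * i) then (k * (c + c) + 1) / 2 else k * (c + c) / 2 + 1) =
          if Even i then 2 ^ (k * (c + c) / 2) else 2 ^ (k * (c + c) / 2) * 2 := by
      simp only [Nat.even_mul, hk2, false_or, hexp]
      split_ifs
      exacts [rfl, pow_succ _ _]
    rw [sum_congr rfl fun i _ => hterm i, ← two_mul, sum_range_two_mul_ite_even, nsmul_eq_mul]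
    push_cast
    ring
  · have hexp : k * m / 2 + 1 = (k * m - 1) / 2 + 1 := by grind
    have hexp' : (k * m + 1) / 2 = (k * m - 1) / 2 + 1 := by grind
    simp only [hexp, hexp', ite_self, sum_const, card_range, nsmul_eq_mul, pow_succ]
    ring

end Sums

open MulAction in
theorem card_orbits_mul_two_mul (k m : ℕ) [NeZero k] [NeZero m] :
    Nat.card (orbitRel.Quotient (DihedralGroup m) (BlockWord k m)) * (2 * m) =
      ∑ i ∈ range m, 2 ^ (k * m.gcd i) +
        ∑ i ∈ range m, 2 ^ (if Even (k * i) then (k * m + 1) / 2 else k * m / 2 + 1) := by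
  classical
  rw [Nat.card_eq_fintype_card, ← DihedralGroup.card,
    ← sum_card_fixedBy_eq_card_orbits_mul_card_group, ← DihedralGroup.equivSum.symm.sum_comp,
    Fintype.sum_sum_type, ← sum_zmod_val_eq_sum_range m, ← sum_zmod_val_eq_sum_range m]
  congr 1 <;> refine Fintype.sum_congr _ _ fun i => ?_ <;> rw [Fintype.card_eq_nat_card]
  · refine (card_rotIndex_invariant _).trans ?_
    rw [Nat.card_eq_fintype_card, Fintype.card_bool, Nat.gcd_mul_left]
  · refine (card_reflection_invariant _).trans ?_
    rw [Nat.card_eq_fintype_card, Fintype.card_bool]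

/-- for `k ∣ n`, the number of orbits of `D^k_n = {ρ^{ik}, τ∘ρ^{ik}}`
acting on `{0,1}^n` equals `g_{n,k}/2 + l`, with `g_{n,k} = (k/n) Σ_{t ∣ (n/k)} φ(t) 2^{n/t}`
and `l` as in Corollary 1. -/
theorem k_dihedral_orbit_count (n k : ℕ) (hn : 0 < n) (hk : 0 < k) (hkn : k ∣ n) :
    ((Finset.univ.image (kDihOrbit n k)).card : ℚ)
      = ((k : ℚ) / n) * (∑ t ∈ (n / k).divisors, (t.totient : ℚ) * 2 ^ (n / t)) / 2
        + (if Even n then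
            (if Even k then 2 ^ (n / 2 - 1) else (3 / 4) * 2 ^ (n / 2))
          else 2 ^ ((n - 1) / 2)) := by
  obtain ⟨m, rfl⟩ := hkn
  have : NeZero k := ⟨hk.ne'⟩
  have : NeZero m := ⟨(Nat.pos_of_mul_pos_left hn).ne'⟩
  have hcount := congrArg (Nat.cast : ℕ → ℚ) (card_orbits_mul_two_mul k m)
  rw [sum_range_two_pow_mul_gcd] at hcount
  push_cast at hcount
  have hm : (m : ℚ) ≠ 0 := Nat.cast_ne_zero.mpr (NeZero.ne m)
  rw [card_image_kDihOrbit, Nat.mul_div_cancel_left m hk, ← sum_reflection_exponent_div]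
  push_cast
  field_simp
  linear_combination hcount
end

section
/- Let m be an even positive integer, let g : {0,1}^m → {0,1} be a bent function (i.e., |W_g(w)| = 2^{m/2} for every w ∈ {0,1}^m), and let f : {0,1}^n → {0,1} be any Boolean function. Define h : {0,1}^{n+m} → {0,1} by h(x,y) = f(x) ⊕ g(y). Then nl(h) = 2^{n+m−1} − 2^{(m−2)/2} · (2^n − 2·nl(f)). -/
section Aux

lemma sgn_xor (a b : Bool) : sgn (xor a b) = sgn a * sgn b := by
  cases a <;> cases b <;> simp [sgn]

lemma sum_sgn {n : ℕ} (F : (Fin n → Bool) → Bool) :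
    ∑ x : Fin n → Bool, sgn (F x)
      = 2 ^ n - 2 * ((Finset.univ.filter fun x => F x = true).card : ℤ) := by
  have h1 : ∀ x, sgn (F x) = 1 - 2 * (if F x = true then (1:ℤ) else 0) := by
    intro x; cases hx : F x <;> simp [sgn, hx]
  rw [Finset.sum_congr rfl (fun x _ => h1 x), Finset.sum_sub_distrib]
  rw [Finset.sum_const, ← Finset.mul_sum, ← Finset.sum_filter]
  simp [Finset.card_univ]

lemma sgn_mul_walsh {n : ℕ} (f : (Fin n → Bool) → Bool) (c : Bool) (w : Fin n → Bool) :
    sgn c * walsh f w = 2 ^ n - 2 * (hDist f (bAffine c w) : ℤ) := by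
  have : sgn c * walsh f w = ∑ x : Fin n → Bool, sgn (xor (f x) (bAffine c w x)) := by
    unfold walsh
    rw [Finset.mul_sum]
    refine Finset.sum_congr rfl fun x _ => ?_
    rw [sgn_xor]
    unfold bAffine
    rw [sgn_xor]
    ring
  rw [this, sum_sgn]
  have hfe : (Finset.univ.filter fun x => (xor (f x) (bAffine c w x)) = true)
      = Finset.univ.filter fun x => f x ≠ bAffine c w x := by
    refine Finset.filter_congr fun x _ => ?_
    cases f x <;> cases bAffine c w x <;> simp
  unfold hDist
  rw [hfe]

/-- The max absolute Walsh value. -/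
noncomputable def walshMax {n : ℕ} (f : (Fin n → Bool) → Bool) : ℕ :=
  Finset.univ.sup (fun w : Fin n → Bool => (walsh f w).natAbs)

lemma two_nl {n : ℕ} (f : (Fin n → Bool) → Bool) :
    2 * (nl f : ℤ) = 2 ^ n - (walshMax f : ℤ) := by
  -- nl is attained
  obtain ⟨p, -, hp⟩ := Finset.exists_mem_eq_inf' (Finset.univ_nonempty)
    (fun p : Bool × (Fin n → Bool) => hDist f (bAffine p.1 p.2))
  -- walshMax is attained
  obtain ⟨w, -, hw⟩ := Finset.exists_mem_eq_sup Finset.univ Finset.univ_nonempty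
    (fun w : Fin n → Bool => (walsh f w).natAbs)
  have habs : ∀ (c : Bool) (v : Fin n → Bool), sgn c * walsh f v ≤ |walsh f v| := by
    intro c v; cases c <;> simp [sgn] <;> [exact le_abs_self _; exact neg_le_abs _]
  have hle : 2 * (nl f : ℤ) ≤ 2 ^ n - (walshMax f : ℤ) := by
    set c : Bool := decide (walsh f w < 0) with hc
    have hcw : sgn c * walsh f w = ((walsh f w).natAbs : ℤ) := by
      rw [hc]
      by_cases h : walsh f w < 0
      · rw [decide_eq_true h]
        show (-1) * walsh f w = ((walsh f w).natAbs : ℤ)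
        omega
      · rw [decide_eq_false h]
        show 1 * walsh f w = ((walsh f w).natAbs : ℤ)
        omega
    have h1 : (nl f : ℤ) ≤ (hDist f (bAffine c w) : ℤ) := by
      exact_mod_cast Finset.inf'_le _ (Finset.mem_univ (c, w))
    have h2 := sgn_mul_walsh f c w
    rw [hcw, ← hw] at h2
    unfold walshMax
    omega
  have hge : 2 ^ n - (walshMax f : ℤ) ≤ 2 * (nl f : ℤ) := by
    have h2 := sgn_mul_walsh f p.1 p.2
    have h3 : ((walsh f p.2).natAbs : ℤ) ≤ (walshMax f : ℤ) := by
      exact_mod_cast Finset.le_sup (f := fun w : Fin n → Bool => (walsh f w).natAbs)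
        (Finset.mem_univ p.2)
    have h4 : sgn p.1 * walsh f p.2 ≤ |walsh f p.2| := habs _ _
    rw [Int.abs_eq_natAbs] at h4
    unfold nl
    rw [hp]
    omega
  omega

/-- Splitting equivalence for concatenated inputs. -/
def bvSplit (n m : ℕ) : (Fin (n + m) → Bool) ≃ (Fin n → Bool) × (Fin m → Bool) where
  toFun x := (fun i => x (Fin.castAdd m i), fun j => x (Fin.natAdd n j))
  invFun p := fun k => Fin.addCases (motive := fun _ => Bool) p.1 p.2 k
  left_inv x := by
    funext k
    refine Fin.addCases (fun i => ?_) (fun j => ?_) k <;> simp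
  right_inv p := by
    refine Prod.ext ?_ ?_ <;> funext i <;> simp

lemma parity_add (a b : ℕ) :
    ((a + b) % 2 == 1) = xor (a % 2 == 1) (b % 2 == 1) := by
  rcases Nat.mod_two_eq_zero_or_one a with h1 | h1 <;>
    rcases Nat.mod_two_eq_zero_or_one b with h2 | h2 <;>
    simp [Nat.add_mod, h1, h2]

lemma bIP_split {n m : ℕ} (x w : Fin (n + m) → Bool) :
    bIP x w = xor (bIP (fun i => x (Fin.castAdd m i)) (fun i => w (Fin.castAdd m i)))
                  (bIP (fun j => x (Fin.natAdd n j)) (fun j => w (Fin.natAdd n j))) := by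
  unfold bIP
  rw [← parity_add]
  congr 1
  rw [Finset.card_filter, Finset.card_filter, Finset.card_filter, Fin.sum_univ_add]

lemma walsh_concat {n m : ℕ} (f : (Fin n → Bool) → Bool) (g : (Fin m → Bool) → Bool)
    (w : Fin (n + m) → Bool) :
    walsh (fun x : Fin (n + m) → Bool =>
        xor (f fun i => x (Fin.castAdd m i)) (g fun j => x (Fin.natAdd n j))) w
      = walsh f (fun i => w (Fin.castAdd m i)) * walsh g (fun j => w (Fin.natAdd n j)) := by
  unfold walsh
  have key := Fintype.sum_equiv (bvSplit n m)
    (fun x : Fin (n + m) → Bool =>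
      sgn (xor (f fun i => x (Fin.castAdd m i)) (g fun j => x (Fin.natAdd n j)))
        * sgn (bIP x w))
    (fun p : (Fin n → Bool) × (Fin m → Bool) =>
      (sgn (f p.1) * sgn (bIP p.1 fun i => w (Fin.castAdd m i))) *
      (sgn (g p.2) * sgn (bIP p.2 fun j => w (Fin.natAdd n j))))
    (fun x => by
      simp only [bvSplit, Equiv.coe_fn_mk]
      rw [sgn_xor, bIP_split x w, sgn_xor]
      ring)
  rw [key, Finset.sum_mul_sum, Fintype.sum_prod_type]

lemma walshMax_concat {n m : ℕ} (f : (Fin n → Bool) → Bool) (g : (Fin m → Bool) → Bool)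
    (hg : ∀ w : Fin m → Bool, (walsh g w).natAbs = 2 ^ (m / 2)) :
    walshMax (fun x : Fin (n + m) → Bool =>
        xor (f fun i => x (Fin.castAdd m i)) (g fun j => x (Fin.natAdd n j)))
      = walshMax f * 2 ^ (m / 2) := by
  apply le_antisymm
  · apply Finset.sup_le
    intro w _
    rw [walsh_concat, Int.natAbs_mul, hg]
    exact Nat.mul_le_mul_right _
      (Finset.le_sup (f := fun w : Fin n → Bool => (walsh f w).natAbs) (Finset.mem_univ _))
  · obtain ⟨u, -, hu⟩ := Finset.exists_mem_eq_sup Finset.univ Finset.univ_nonempty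
      (fun w : Fin n → Bool => (walsh f w).natAbs)
    set w₀ : Fin (n + m) → Bool := (bvSplit n m).symm (u, fun _ => false) with hw₀
    have h1 : (fun i => w₀ (Fin.castAdd m i)) = u := by
      funext i; simp [hw₀, bvSplit]
    have h2 : (fun j => w₀ (Fin.natAdd n j)) = fun _ : Fin m => false := by
      funext j; simp [hw₀, bvSplit]
    have key : (walsh (fun x : Fin (n + m) → Bool =>
        xor (f fun i => x (Fin.castAdd m i)) (g fun j => x (Fin.natAdd n j))) w₀).natAbs
        = walshMax f * 2 ^ (m / 2) := by
      rw [walsh_concat, Int.natAbs_mul, h1, h2, hg, walshMax, ← hu]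
    rw [← key]
    unfold walshMax
    exact Finset.le_sup (f := fun w : Fin (n + m) → Bool =>
      (walsh (fun x : Fin (n + m) → Bool =>
        xor (f fun i => x (Fin.castAdd m i)) (g fun j => x (Fin.natAdd n j))) w).natAbs)
      (Finset.mem_univ w₀)

end Aux

/-- concatenating an arbitrary `n`-variable function `f` with an
`m`-variable bent function `g` (m even) yields `h(x,y) = f(x) ⊕ g(y)` with
`nl(h) = 2^{n+m-1} − 2^{(m−2)/2}(2^n − 2 nl(f))`. -/
theorem bent_concatenation_nonlinearity (n m : ℕ) (hm : Even m) (hm0 : 0 < m)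
    (g : (Fin m → Bool) → Bool)
    (hg : ∀ w : Fin m → Bool, (walsh g w).natAbs = 2 ^ (m / 2))
    (f : (Fin n → Bool) → Bool) :
    (nl (fun x : Fin (n + m) → Bool =>
        xor (f fun i => x (Fin.castAdd m i)) (g fun j => x (Fin.natAdd n j))) : ℤ)
      = 2 ^ (n + m - 1) - 2 ^ ((m - 2) / 2) * (2 ^ n - 2 * (nl f : ℤ)) := by
  set h := fun x : Fin (n + m) → Bool =>
      xor (f fun i => x (Fin.castAdd m i)) (g fun j => x (Fin.natAdd n j)) with hh
  have e1 := two_nl h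
  have e2 := two_nl f
  have e3 : (walshMax h : ℤ) = 2 ^ (m / 2) * (walshMax f : ℤ) := by
    rw [hh, walshMax_concat f g hg]
    push_cast
    ring
  obtain ⟨k, hk⟩ := hm
  have hk1 : 1 ≤ k := by omega
  have hm2 : m / 2 = k := by omega
  have hm2' : (m - 2) / 2 = k - 1 := by omega
  have hpow1 : (2 : ℤ) ^ (n + m) = 2 * 2 ^ (n + m - 1) := by
    rw [← pow_succ']
    congr 1
    omega
  have hpow2 : (2 : ℤ) ^ (m / 2) = 2 * 2 ^ ((m - 2) / 2) := by
    rw [← pow_succ']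
    congr 1
    omega
  rw [hpow1] at e1
  rw [hpow2] at e3
  have e4 : (walshMax f : ℤ) = 2 ^ n - 2 * (nl f : ℤ) := by linarith
  rw [e4] at e3
  linarith
end
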